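/- Let h, h' : [n] → [n] be Hessenberg functions with h'(i) ≤ h(i) for all i, and let w_h, w_{h'} be the corresponding codominant permutations. Then w_{h'} ≤ w_h in the Bruhat order on S_n. -/

import Mathlib

/-- A Hessenberg function on `Fin n`: `i ≤ h i` and `h` is weakly increasing. -/
def IsHessenberg {n : ℕ} (h : Fin n → Fin n) : Prop :=
  (∀ i, i ≤ h i) ∧ Monotone h

/-- Lexicographic order on one-line notations of permutations. -/
def LexLE {n : ℕ} (u v : Equiv.Perm (Fin n)) : Prop :=
  u = v ∨ ∃ i : Fin n, (∀ j, j < i → u j = v j) ∧ u i < v i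

/-- `w` is bounded by the Hessenberg function `h`: `w i ≤ h i` for all `i`. -/
def Bounded {n : ℕ} (h : Fin n → Fin n) (w : Equiv.Perm (Fin n)) : Prop :=
  ∀ i, w i ≤ h i

/-- `w` is the lexicographically maximal permutation with `w i ≤ h i` for all `i`. -/
def IsMaxFor {n : ℕ} (h : Fin n → Fin n) (w : Equiv.Perm (Fin n)) : Prop :=
  Bounded h w ∧ ∀ w', Bounded h w' → LexLE w' w

/-- The Coxeter length of a permutation: its number of inversions. -/
def lengthPerm {n : ℕ} (w : Equiv.Perm (Fin n)) : ℕ :=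
  (Finset.univ.filter fun p : Fin n × Fin n => p.1 < p.2 ∧ w p.2 < w p.1).card

/-- `w` avoids the pattern 312. -/
def Avoids312 {n : ℕ} (w : Equiv.Perm (Fin n)) : Prop :=
  ¬ ∃ i j k : Fin n, i < j ∧ j < k ∧ w j < w k ∧ w k < w i

/-- The Bruhat order on `S_n`, generated by `w < w * t` for transpositions `t`
with `ℓ(w) < ℓ(w * t)`. -/
def BruhatLE {n : ℕ} (u w : Equiv.Perm (Fin n)) : Prop :=
  Relation.ReflTransGen
    (fun x y => (∃ t : Equiv.Perm (Fin n), t.IsSwap ∧ y = x * t) ∧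
      lengthPerm x < lengthPerm y) u w


/-!
Induction on `h` in the pointwise order. Call `w` greedy for `h` if each `w j` is the largest
value `≤ h j` not among `w 0, …, w (j - 1)`; for monotone `h` this characterises the
lexicographically maximal bounded permutation. If `h' ≠ h`, let `i` be the first index with
`h' i < h i`. Then `h j < h i` for `j < i`, so `w i = h i`, and lowering `h i` by one gives a
Hessenberg function `h''` with `h' ≤ h'' < h`. If `w k` is the largest value below `w i` not
used before position `i`, then `w * (i k)` is greedy for `h''`, and it lies one Bruhat step
below `w`.
-/

open Equiv Function Finset

section Inversions

variable {n : ℕ}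

def inversions (u : Perm (Fin n)) : Finset (Fin n × Fin n) :=
  univ.filter fun p => p.1 < p.2 ∧ u p.2 < u p.1

@[simp]
lemma mem_inversions {u : Perm (Fin n)} {p : Fin n × Fin n} :
    p ∈ inversions u ↔ p.1 < p.2 ∧ u p.2 < u p.1 := by
  simp [inversions]

lemma lengthPerm_eq_card_inversions (u : Perm (Fin n)) : lengthPerm u = #(inversions u) := rfl

lemma mul_swap_apply_lt_of_swap_apply_lt {u : Perm (Fin n)} {i k x y : Fin n}
    (hik : i < k) (hu : u i < u k) (hxy : x < y) (hinv : u y < u x)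
    (hflip : swap i k y < swap i k x) : (u * swap i k) y < (u * swap i k) x := by
  simp only [Perm.mul_apply, swap_apply_def] at hflip ⊢
  split_ifs at hflip ⊢ <;> subst_vars <;> order

lemma lengthPerm_lt_mul_swap {u : Perm (Fin n)} {i k : Fin n} (hik : i < k)
    (hu : u i < u k) : lengthPerm u < lengthPerm (u * swap i k) := by
  set τ := swap i k
  -- `φ` relabels an inversion of `u` by `τ`, unless `τ` reverses the order of its entries
  let φ : Fin n × Fin n → Fin n × Fin n := fun p => if τ p.1 < τ p.2 then (τ p.1, τ p.2) else p
  have hφφ : ∀ p : Fin n × Fin n, p.1 < p.2 → φ (φ p) = p := by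
    rintro ⟨x, y⟩ hxy
    by_cases hτ : τ x < τ y <;> simp [φ, hτ, hxy, τ]
  have hmaps : Set.MapsTo φ (inversions u) ((inversions (u * τ)).erase (i, k)) := by
    rintro ⟨x, y⟩ hp
    simp only [mem_coe, mem_inversions] at hp
    obtain ⟨hxy, hinv⟩ := hp
    simp only [mem_coe, mem_erase, mem_inversions]
    by_cases hτ : τ x < τ y
    · simp only [φ, hτ, if_true, Perm.mul_apply, τ, swap_apply_self, true_and]
      refine ⟨fun he => ?_, hinv⟩
      simp only [Prod.mk.injEq, swap_apply_eq_iff, swap_apply_left, swap_apply_right] at he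
      exact absurd (he.1 ▸ he.2 ▸ hxy) hik.not_gt
    · simp only [φ, hτ, if_false]
      refine ⟨fun he => ?_, hxy, mul_swap_apply_lt_of_swap_apply_lt hik hu hxy hinv
        ((not_lt.1 hτ).lt_of_ne (τ.injective.ne hxy.ne'))⟩
      simp only [Prod.mk.injEq] at he
      exact absurd (he.1 ▸ he.2 ▸ hinv) hu.not_gt
  have hinj : Set.InjOn φ (inversions u) := by
    intro p hp q hq hpq
    rw [mem_coe, mem_inversions] at hp hq
    rw [← hφφ p hp.1, hpq, hφφ q hq.1]
  have hB : (i, k) ∈ inversions (u * τ) := by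
    simpa [τ] using ⟨hik, hu⟩
  rw [lengthPerm_eq_card_inversions, lengthPerm_eq_card_inversions]
  calc #(inversions u) ≤ #((inversions (u * τ)).erase (i, k)) := card_le_card_of_injOn φ hmaps hinj
    _ < #(inversions (u * τ)) := card_erase_lt_of_mem hB

end Inversions

section Lex

variable {n : ℕ} {u v : Perm (Fin n)}

lemma exists_eqOn_Iio_ne_of_ne (huv : u ≠ v) : ∃ j, (∀ l < j, u l = v l) ∧ u j ≠ v j := by
  obtain ⟨j, hj, hmin⟩ := wellFounded_lt.has_min {j | u j ≠ v j} (by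
    by_contra hempty
    exact huv (Perm.ext fun x => by_contra fun hx => hempty ⟨x, hx⟩))
  exact ⟨j, fun l hl => by_contra fun hne => hmin l hne hl, hj⟩

lemma not_lexLE_of_eqOn_Iio_of_lt {j : Fin n} (heq : ∀ l < j, u l = v l) (hlt : v j < u j) :
    ¬ LexLE u v := by
  rintro (rfl | ⟨i, hpre, hi⟩)
  · exact hlt.false
  rcases lt_trichotomy i j with hij | rfl | hji
  · exact (heq i hij ▸ hi).false
  · exact (hi.trans hlt).false
  · exact (hpre j hji ▸ hlt).false

lemma LexLE.antisymm (huv : LexLE u v) (hvu : LexLE v u) : u = v := by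
  rcases huv with huv | ⟨i, hpre, hi⟩
  · exact huv
  · exact absurd hvu (not_lexLE_of_eqOn_Iio_of_lt (fun l hl => (hpre l hl).symm) hi)

end Lex

lemma IsMaxFor.unique {n : ℕ} {h : Fin n → Fin n} {w w₂ : Perm (Fin n)} (hw : IsMaxFor h w)
    (hw₂ : IsMaxFor h w₂) : w = w₂ :=
  (hw₂.2 w hw.1).antisymm (hw.2 w₂ hw₂.1)

def IsGreedyFor {n : ℕ} (h : Fin n → Fin n) (w : Perm (Fin n)) : Prop :=
  ∀ j c, c ≤ h j → (∀ l < j, w l ≠ c) → c ≤ w j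

section Greedy

variable {n : ℕ} {h : Fin n → Fin n} {w : Perm (Fin n)}

lemma IsMaxFor.isGreedyFor (hmono : Monotone h) (hw : IsMaxFor h w) : IsGreedyFor h w := by
  intro j c hc hunused
  by_contra! hlt
  set k := w.symm c
  have hwk : w k = c := w.apply_symm_apply c
  have hjk : j < k := by
    rcases lt_trichotomy k j with hkj | rfl | hjk
    · exact absurd hwk (hunused k hkj)
    · exact absurd hwk hlt.ne
    · exact hjk
  -- moving `c` forward to position `j` keeps the bound and increases `w` lexicographically
  have hb : Bounded h (w * swap j k) := by
    intro x
    rcases eq_or_ne x j with rfl | hxj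
    · simpa [hwk] using hc
    rcases eq_or_ne x k with rfl | hxk
    · simpa using (hw.1 j).trans (hmono hjk.le)
    · simpa [swap_apply_of_ne_of_ne hxj hxk] using hw.1 x
  refine not_lexLE_of_eqOn_Iio_of_lt (j := j) (fun l hl => ?_) ?_ (hw.2 _ hb)
  · simp [swap_apply_of_ne_of_ne hl.ne (hl.trans hjk).ne]
  · simpa [hwk] using hlt

lemma isMaxFor_of_isGreedyFor (hb : Bounded h w) (hg : IsGreedyFor h w) : IsMaxFor h w := by
  refine ⟨hb, fun u hu => ?_⟩
  by_cases huw : u = w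
  · exact Or.inl huw
  obtain ⟨j, hpre, hj⟩ := exists_eqOn_Iio_ne_of_ne huw
  refine Or.inr ⟨j, hpre, (hg j (u j) (hu j) fun l hl => ?_).lt_of_ne hj⟩
  rw [← hpre l hl]
  exact u.injective.ne hl.ne

lemma IsMaxFor.apply_eq (hmono : Monotone h) (hw : IsMaxFor h w) {i : Fin n}
    (hlt : ∀ j < i, h j < h i) : w i = h i :=
  (hw.1 i).antisymm <| hw.isGreedyFor hmono i (h i) le_rfl fun l hl =>
    ((hw.1 l).trans_lt (hlt l hl)).ne

end Greedy

lemma exists_max_notMem_image_Iio {n : ℕ} (w : Perm (Fin n)) {i m : Fin n} (him : i < m) :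
    ∃ a < m, (∀ l < i, w l ≠ a) ∧ ∀ c < m, (∀ l < i, w l ≠ c) → c ≤ a := by
  set S := Iio m \ (Iio i).image w
  have hS : S.Nonempty := by
    refine sdiff_nonempty.2 fun hsub => ?_
    have := (card_le_card hsub).trans card_image_le
    rw [Fin.card_Iio, Fin.card_Iio] at this
    exact this.not_gt him
  have hmem : ∀ c, c ∈ S ↔ c < m ∧ ∀ l < i, w l ≠ c := by
    simp [S]
  obtain ⟨ham, hau⟩ := (hmem _).1 (S.max'_mem hS)
  exact ⟨S.max' hS, ham, hau, fun c hc hcu => S.le_max' c ((hmem c).2 ⟨hc, hcu⟩)⟩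

lemma Monotone.update_of_le {n : ℕ} {h : Fin n → Fin n} (hmono : Monotone h) {i b : Fin n}
    (hb : ∀ j < i, h j ≤ b) (hbi : b ≤ h i) : Monotone (update h i b) := by
  intro x y hxy
  simp only [update_apply]
  split_ifs with hx hy hy
  · rfl
  · exact hbi.trans (hmono (hx ▸ hxy))
  · exact hb x (lt_of_le_of_ne (hy ▸ hxy) hx)
  · exact hmono hxy

section SwapStep

variable {n : ℕ} {h : Fin n → Fin n} {w : Perm (Fin n)} {i k : Fin n}

lemma Bounded.update_mul_swap (hmono : Monotone h) (hb : Bounded h w) (hik : i < k) {b : Fin n}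
    (hkb : w k ≤ b) : Bounded (update h i b) (w * swap i k) := by
  intro x
  rcases eq_or_ne x i with rfl | hxi
  · simpa using hkb
  rcases eq_or_ne x k with rfl | hxk
  · simpa [hxi] using (hb i).trans (hmono hik.le)
  · simpa [hxi, swap_apply_of_ne_of_ne hxi hxk] using hb x

lemma IsGreedyFor.lt_apply_of_lt_of_lt (hmono : Monotone h) (hb : Bounded h w)
    (hg : IsGreedyFor h w) (hki : w k < w i) (hmax : ∀ c < w i, (∀ l < i, w l ≠ c) → c ≤ w k)
    {j : Fin n} (hij : i < j) (hjk : j < k) : w i < w j := by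
  have hkj : w k < w j := by
    refine (hg j (w k) ((hki.le.trans (hb i)).trans (hmono hij.le)) fun l hl => ?_).lt_of_ne
      (w.injective.ne hjk.ne')
    exact w.injective.ne (hl.trans hjk).ne
  by_contra! hji
  have hji : w j < w i := hji.lt_of_ne (w.injective.ne hij.ne')
  exact (hmax (w j) hji fun l hl => w.injective.ne (hl.trans hij).ne).not_gt hkj

lemma IsGreedyFor.update_mul_swap (hmono : Monotone h) (hb : Bounded h w)
    (hg : IsGreedyFor h w) (hik : i < k) (hki : w k < w i)
    (hmax : ∀ c < w i, (∀ l < i, w l ≠ c) → c ≤ w k) {b : Fin n} (hbi : ∀ c, c ≤ b ↔ c < w i) :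
    IsGreedyFor (update h i b) (w * swap i k) := by
  intro j c hc hunused
  have hunused_of_ne : ∀ l < j, l ≠ i → l ≠ k → w l ≠ c := fun l hl hli hlk => by
    simpa [swap_apply_of_ne_of_ne hli hlk] using hunused l hl
  rcases lt_trichotomy j i with hji | rfl | hij
  · rw [update_of_ne hji.ne] at hc
    rw [Perm.mul_apply, swap_apply_of_ne_of_ne hji.ne (hji.trans hik).ne]
    exact hg j c hc fun l hl => hunused_of_ne l hl (hl.trans hji).ne (hl.trans (hji.trans hik)).ne
  · simp only [update_self, hbi] at hc
    simpa using hmax c hc fun l hl => hunused_of_ne l hl hl.ne (hl.trans hik).ne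
  rw [update_of_ne hij.ne'] at hc
  rcases lt_trichotomy j k with hjk | rfl | hkj
  · rw [Perm.mul_apply, swap_apply_of_ne_of_ne hij.ne' hjk.ne]
    by_cases hci : c = w i
    · exact hci ▸ (hg.lt_apply_of_lt_of_lt hmono hb hki hmax hij hjk).le
    refine hg j c hc fun l hl => ?_
    rcases eq_or_ne l i with rfl | hli
    · exact Ne.symm hci
    · exact hunused_of_ne l hl hli (hl.trans hjk).ne
  · simp only [Perm.mul_apply, swap_apply_right]
    by_contra! hlt
    refine ((hg j c hc fun l hl => ?_).trans_lt (hki.trans hlt)).false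
    rcases eq_or_ne l i with rfl | hli
    · exact hlt.ne
    · exact hunused_of_ne l hl hli hl.ne
  · rw [Perm.mul_apply, swap_apply_of_ne_of_ne (hik.trans hkj).ne' hkj.ne']
    refine hg j c hc fun l hl => ?_
    rw [← swap_apply_self i k l, ← Perm.mul_apply]
    refine hunused _ ?_
    rcases eq_or_ne l i with rfl | hli
    · simpa using hkj
    rcases eq_or_ne l k with rfl | hlk
    · simpa using hik.trans hkj
    · simpa [swap_apply_of_ne_of_ne hli hlk] using hl

end SwapStep

lemma IsMaxFor.exists_isMaxFor_update_pred {n : ℕ} {h : Fin n → Fin n} {w : Perm (Fin n)}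
    (hmono : Monotone h) (hw : IsMaxFor h w) {i : Fin n} (hi : i < h i)
    (hlt : ∀ j < i, h j < h i) :
    ∃ k, i < k ∧ w k < w i ∧ IsMaxFor (update h i (Order.pred (h i))) (w * swap i k) := by
  have hwi : w i = h i := hw.apply_eq hmono hlt
  have hpred : ∀ c, c ≤ Order.pred (h i) ↔ c < w i := fun c => by
    rw [hwi]
    exact Order.le_pred_iff_of_not_isMin (not_isMin_of_lt hi)
  obtain ⟨a, ha, hau, hamax⟩ := exists_max_notMem_image_Iio w (hwi ▸ hi : i < w i)
  set k := w.symm a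
  have hwk : w k = a := w.apply_symm_apply a
  have hik : i < k := by
    rcases lt_trichotomy k i with hki | rfl | hik
    · exact absurd hwk (hau k hki)
    · exact absurd hwk ha.ne'
    · exact hik
  rw [← hwk] at ha hamax
  refine ⟨k, hik, ha, isMaxFor_of_isGreedyFor ?_ ?_⟩
  · exact hw.1.update_mul_swap hmono hik ((hpred _).2 ha)
  · exact (hw.isGreedyFor hmono).update_mul_swap hmono hw.1 hik ha hamax hpred

lemma bruhatLE_mul_swap {n : ℕ} {u : Perm (Fin n)} {i k : Fin n} (hik : i < k)
    (hu : u i < u k) : BruhatLE u (u * swap i k) :=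
  .single ⟨⟨swap i k, ⟨i, k, hik.ne, rfl⟩, rfl⟩, lengthPerm_lt_mul_swap hik hu⟩

lemma BruhatLE.trans {n : ℕ} {u v w : Perm (Fin n)} (huv : BruhatLE u v) (hvw : BruhatLE v w) :
    BruhatLE u w :=
  Relation.ReflTransGen.trans huv hvw

/-- if `h' ≤ h` pointwise are Hessenberg functions, then the associated
codominant permutations satisfy `w_{h'} ≤ w_h` in Bruhat order. -/
theorem stmt19 (n : ℕ) (h h' : Fin n → Fin n)
    (hh : IsHessenberg h) (hh' : IsHessenberg h') (hle : ∀ i, h' i ≤ h i)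
    (w w' : Equiv.Perm (Fin n)) (hw : IsMaxFor h w) (hw' : IsMaxFor h' w') :
    BruhatLE w' w := by
  induction h using WellFoundedLT.induction generalizing w with
  | _ h IH =>
  by_cases hh'h : h' = h
  · subst hh'h
    exact hw'.unique hw ▸ .refl
  obtain ⟨i, hi, hmin⟩ : ∃ i, h' i < h i ∧ ∀ j < i, h' j = h j := by
    obtain ⟨j, hj⟩ := Function.ne_iff.1 hh'h
    obtain ⟨i, hi, hmin⟩ := wellFounded_lt.has_min {i | h' i < h i} ⟨j, (hle j).lt_of_ne hj⟩
    exact ⟨i, hi, fun j hj => (hle j).eq_of_not_lt fun hlt => hmin j hlt hj⟩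
  have hih : i < h i := (hh'.1 i).trans_lt hi
  have hlt : ∀ j < i, h j < h i := fun j hj => (hmin j hj ▸ hh'.2 hj.le).trans_lt hi
  obtain ⟨k, hik, hki, hv⟩ := hw.exists_isMaxFor_update_pred hh.2 hih hlt
  have hle' : ∀ j, h' j ≤ update h i (Order.pred (h i)) j := fun j => by
    rcases eq_or_ne j i with rfl | hji
    · simpa using Order.le_pred_of_lt hi
    · simpa [hji] using hle j
  have hmono : Monotone (update h i (Order.pred (h i))) :=
    hh.2.update_of_le (fun j hj => Order.le_pred_of_lt (hlt j hj)) (Order.pred_le _)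
  have hstep : BruhatLE (w * swap i k) w := by
    simpa using bruhatLE_mul_swap (u := w * swap i k) hik (by simpa using hki)
  exact (IH _ (update_lt_self_iff.2 (Order.pred_lt_of_not_isMin (not_isMin_of_lt hih)))
    ⟨fun j => (hh'.1 j).trans (hle' j), hmono⟩ hle' _ hv).trans hstep
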